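/- arXiv:1608.01412 — 2 statements merged into one kernel-verified Lean document; each statement's English description precedes it below -/
import Mathlib

section
/- For every positive integer n, ζ({2}^n) = π^{2n} / (2n+1)!. -/
open Real Finset

/-- Multiple zeta value with real exponents `a i`, summed over
`1 ≤ k₁ < k₂ < ⋯ < k_r`. -/
noncomputable def mzv {r : ℕ} (a : Fin r → ℝ) : ℝ :=
  ∑' f : {f : Fin r → ℕ // (∀ i, 1 ≤ f i) ∧ StrictMono f},
    ∏ i, ((f.1 i : ℝ)) ^ (-(a i))

/-- Multiple zeta star value with real exponents `a i`, summed over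
`1 ≤ k₁ ≤ k₂ ≤ ⋯ ≤ k_r`. -/
noncomputable def mzsv {r : ℕ} (a : Fin r → ℝ) : ℝ :=
  ∑' f : {f : Fin r → ℕ // (∀ i, 1 ≤ f i) ∧ Monotone f},
    ∏ i, ((f.1 i : ℝ)) ^ (-(a i))

/-!
Euler's product `sin (π x) / (π x) = ∏_{k ≥ 1} (1 - x² / k²)` expands, by choosing the term
`-x² / k²` from the factors with `k ∈ {k₁ < ⋯ < kₙ}` and `1` from all others, into
`∑ₙ ζ({2}^n) (-x²)ⁿ`. The Taylor series of the same function is `∑ₙ π^{2n} / (2n+1)! · (-x²)ⁿ`.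
So two power series in `y = -x²` agree for all `y < 0`, and the identity theorem for analytic
functions identifies their coefficients.
-/

open Filter Topology FormalMultilinearSeries

section Esymm

variable {ι 𝕜 : Type*} [NormedField 𝕜]

noncomputable def esymmTsum (w : ι → 𝕜) (n : ℕ) : 𝕜 :=
  ∑' s : {s : Finset ι // s.card = n}, ∏ i ∈ s.1, w i

theorem esymmTsum_const_mul (x : 𝕜) (w : ι → 𝕜) (n : ℕ) :
    esymmTsum (fun i => x * w i) n = x ^ n * esymmTsum w n := by
  rw [esymmTsum, esymmTsum, ← tsum_mul_left]
  refine tsum_congr fun s => ?_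
  rw [prod_mul_distrib, prod_const, s.2]

variable [CompleteSpace 𝕜]

theorem hasSum_esymmTsum {w : ι → 𝕜} (hw : Summable (‖w ·‖)) :
    HasSum (esymmTsum w) (∏' i, (1 + w i)) := by
  have hprod := summable_finsetProd_of_summable_norm hw
  rw [tprod_one_add hprod]
  exact hprod.hasSum.tsum_fiberwise Finset.card

theorem hasSum_esymmTsum_mul_pow {w : ι → 𝕜} (hw : Summable (‖w ·‖)) (x : 𝕜) :
    HasSum (fun n => esymmTsum w n * x ^ n) (∏' i, (1 + x * w i)) := by
  have hxw : Summable (‖x * w ·‖) := by simpa only [norm_mul] using hw.mul_left ‖x‖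
  convert hasSum_esymmTsum hxw using 1
  ext n
  rw [esymmTsum_const_mul, mul_comm]

end Esymm

section PowerSeries

variable {𝕜 : Type*} [NontriviallyNormedField 𝕜]

theorem FormalMultilinearSeries.le_radius_ofScalars_of_summable {c : ℕ → 𝕜} {y : 𝕜}
    (h : Summable fun n => c n * y ^ n) : (‖y‖₊ : ENNReal) ≤ (ofScalars 𝕜 c).radius := by
  refine (ofScalars 𝕜 c).le_radius_of_tendsto (l := 0) ?_
  simpa only [ofScalars_norm, coe_nnnorm, norm_mul, norm_pow, norm_zero]
    using h.tendsto_atTop_zero.norm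

variable [CompleteSpace 𝕜]

theorem eq_of_frequently_tsum_mul_pow_eq {a b : ℕ → 𝕜} (ha : 0 < (ofScalars 𝕜 a).radius)
    (hb : 0 < (ofScalars 𝕜 b).radius)
    (h : ∃ᶠ y in 𝓝[≠] 0, ∑' n, a n * y ^ n = ∑' n, b n * y ^ n) : a = b := by
  have hfa := ((ofScalars 𝕜 a).hasFPowerSeriesOnBall ha).hasFPowerSeriesAt
  have hfb := ((ofScalars 𝕜 b).hasFPowerSeriesOnBall hb).hasFPowerSeriesAt
  have hsum (c : ℕ → 𝕜) : (ofScalars 𝕜 c).sum = fun y => ∑' n, c n * y ^ n :=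
    ofScalarsSum_eq_tsum c
  have hab : (ofScalars 𝕜 a).sum =ᶠ[𝓝 0] (ofScalars 𝕜 b).sum :=
    (hfa.analyticAt.frequently_eq_iff_eventually_eq hfb.analyticAt).1 (by rwa [hsum, hsum])
  exact ofScalars_series_injective 𝕜 𝕜 (hfa.eq_formalMultilinearSeries_of_eventually hfb hab)

end PowerSeries

def strictMonoEquivFinsetCard (α : Type*) [LinearOrder α] (n : ℕ) :
    {f : Fin n → α // StrictMono f} ≃ {s : Finset α // s.card = n} where
  toFun f := ⟨univ.image f.1, by rw [card_image_of_injective _ f.2.injective, card_fin]⟩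
  invFun s := ⟨s.1.orderEmbOfFin s.2, (s.1.orderEmbOfFin s.2).strictMono⟩
  left_inv f := Subtype.ext
    (orderEmbOfFin_unique _ (fun i => mem_image_of_mem _ (mem_univ i)) f.2).symm
  right_inv s := Subtype.ext (image_orderEmbOfFin_univ s.1 s.2)

def strictMonoPNatEquiv (n : ℕ) :
    {f : Fin n → ℕ // (∀ i, 1 ≤ f i) ∧ StrictMono f} ≃ {g : Fin n → ℕ+ // StrictMono g} where
  toFun f := ⟨fun i => ⟨f.1 i, f.2.1 i⟩, fun _ _ h => f.2.2 h⟩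
  invFun g := ⟨fun i => g.1 i, fun i => (g.1 i).pos, fun _ _ h => g.2 h⟩
  left_inv _ := rfl
  right_inv _ := rfl

theorem mzv_const (n : ℕ) (s : ℝ) :
    mzv (fun _ : Fin n => s) = esymmTsum (fun k : ℕ+ => (k : ℝ) ^ (-s)) n := by
  rw [mzv, esymmTsum,
    ← ((strictMonoPNatEquiv n).trans (strictMonoEquivFinsetCard ℕ+ n)).tsum_eq]
  refine tsum_congr fun f => ?_
  simp only [Equiv.trans_apply, strictMonoEquivFinsetCard, Equiv.coe_fn_mk]
  rw [prod_image fun i _ j _ h => ((strictMonoPNatEquiv n f).2.injective h)]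
  rfl

theorem hasSum_sin_pi_mul_div {x : ℝ} (hx : x ≠ 0) :
    HasSum (fun n : ℕ => π ^ (2 * n) / (2 * n + 1).factorial * (-x ^ 2) ^ n)
      (sin (π * x) / (π * x)) := by
  have : π * x ≠ 0 := mul_ne_zero pi_ne_zero hx
  refine ((Real.hasSum_sin (π * x)).div_const (π * x)).congr_fun fun n => ?_
  rw [neg_pow, ← pow_mul, pow_succ (π * x), mul_pow]
  field_simp

theorem hasProd_euler_sin_div {x : ℝ} (hx : x ≠ 0) :
    HasProd (fun k : ℕ+ => 1 + -x ^ 2 * ((k : ℝ) ^ 2)⁻¹) (sin (π * x) / (π * x)) := by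
  rw [hasProd_pnat_iff_hasProd_succ (f := fun k : ℕ => 1 + -x ^ 2 * ((k : ℝ) ^ 2)⁻¹)]
  have hsum : Summable fun j : ℕ => -x ^ 2 * (((j + 1 : ℕ) : ℝ) ^ 2)⁻¹ :=
    ((summable_nat_add_iff 1).2 (Real.summable_nat_pow_inv.2 one_lt_two)).mul_left _
  rw [(Real.multipliable_one_add_of_summable hsum).hasProd_iff_tendsto_nat]
  have : π * x ≠ 0 := mul_ne_zero pi_ne_zero hx
  convert (Real.tendsto_euler_sin_prod x).div_const (π * x) using 2 with N
  rw [mul_div_cancel_left₀ _ this]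
  refine prod_congr rfl fun j _ => ?_
  push_cast
  ring

theorem esymmTsum_inv_sq (n : ℕ) :
    esymmTsum (fun k : ℕ+ => ((k : ℝ) ^ 2)⁻¹) n = π ^ (2 * n) / (2 * n + 1).factorial := by
  set w : ℕ+ → ℝ := fun k => ((k : ℝ) ^ 2)⁻¹
  set c : ℕ → ℝ := fun n => π ^ (2 * n) / (2 * n + 1).factorial
  have hw : Summable (‖w ·‖) := by
    simpa [w] using
      ((Real.summable_nat_pow_inv.2 one_lt_two).comp_injective PNat.coe_injective).abs
  have hE (y : ℝ) := hasSum_esymmTsum_mul_pow hw y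
  have hagree : ∀ y < 0, ∑' n, esymmTsum w n * y ^ n = ∑' n, c n * y ^ n := by
    intro y hy
    obtain ⟨x, hx, rfl⟩ : ∃ x : ℝ, x ≠ 0 ∧ -x ^ 2 = y :=
      ⟨√(-y), (sqrt_pos.2 (neg_pos.2 hy)).ne', by rw [sq_sqrt (by linarith), neg_neg]⟩
    rw [(hE _).tsum_eq, (hasProd_euler_sin_div hx).tprod_eq, (hasSum_sin_pi_mul_div hx).tsum_eq]
  have hradius_E : 0 < (ofScalars ℝ (esymmTsum w)).radius :=
    zero_lt_one.trans_le (by simpa using le_radius_ofScalars_of_summable (hE (-1)).summable)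
  have hradius_c : 0 < (ofScalars ℝ c).radius :=
    zero_lt_one.trans_le
      (by simpa using le_radius_ofScalars_of_summable (hasSum_sin_pi_mul_div one_ne_zero).summable)
  have hfreq : ∃ᶠ y in 𝓝[≠] 0, ∑' n, esymmTsum w n * y ^ n = ∑' n, c n * y ^ n :=
    (eventually_nhdsWithin_of_forall (s := Set.Iio 0) hagree).frequently.filter_mono
      (nhdsLT_le_nhdsNE 0)
  exact congrFun (eq_of_frequently_tsum_mul_pow_eq hradius_E hradius_c hfreq) n

theorem zeta_two_rep_general (n : ℕ) :
    mzv (fun _ : Fin n => (2 : ℝ)) = π ^ (2 * n) / (Nat.factorial (2 * n + 1)) := by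
  have hrpow : (fun k : ℕ+ => (k : ℝ) ^ (-(2 : ℝ))) = fun k : ℕ+ => ((k : ℝ) ^ 2)⁻¹ :=
    funext fun k => by rw [rpow_neg (Nat.cast_nonneg _), rpow_two]
  rw [mzv_const, hrpow, esymmTsum_inv_sq]

/-- `ζ({2}^n) = π^{2n}/(2n+1)!`. -/
theorem zeta_two_rep (n : ℕ) (hn : 1 ≤ n) :
    mzv (fun _ : Fin n => (2 : ℝ)) = π ^ (2 * n) / (Nat.factorial (2 * n + 1)) :=
  zeta_two_rep_general n
end

section
/- For every positive integer n, ζ⋆({2}^n) = (−1)^n (π^{2n}/(2n)!) · (2 − 2^{2n}) · B_{2n}, where B_{2n} is the 2n-th Bernoulli number; equivalently ζ⋆({2}^n) = (2πi)^{2n} B_{2n}(1/2)/(2n)!. -/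
/-!
Write `Z_n(N) = ∑_{1 ≤ k₁ ≤ ⋯ ≤ k_n ≤ N} ∏ k_i⁻²` for the coefficient of `x^n` in
`∏_{k=1}^N (1 - x/k²)⁻¹`. Partial fractions give `Z_n(N) = ∑_{m=1}^N c_N(m) m^{-2n}`; by
induction on `n` this needs only `∑_m c_N(m) = 1` (the case `n = 0`) and the telescoping identity
`∑_{M ≤ N} c_M(m)/M² = c_N(m)/m²`. Since `c_N(m) → 2(-1)^{m+1}` with `|c_N(m)| ≤ 2`, dominated
convergence gives `ζ⋆({2}^n) = 2 ∑_m (-1)^{m+1} m^{-2n} = (2 - 2^{2-2n}) ζ(2n)`. Euler's formula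
for `ζ(2n)` and the Fourier series of `B_{2n}(x)` at `x = 1/2` evaluate this series.
-/

open Real Finset

open Filter Topology
open scoped Nat

lemma Fin.monotone_snoc_iff {α : Type*} [Preorder α] {n : ℕ} {g : Fin n → α} {a : α} :
    Monotone (Fin.snoc g a : Fin (n + 1) → α) ↔ Monotone g ∧ ∀ i, g i ≤ a := by
  refine ⟨fun h => ⟨fun i j hij => ?_, fun i => ?_⟩, fun ⟨hg, ha⟩ i j hij => ?_⟩
  · simpa using h (Fin.castSucc_le_castSucc_iff.2 hij)
  · simpa using h (Fin.le_last i.castSucc)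
  · induction j using Fin.lastCases with
    | last => induction i using Fin.lastCases with
      | last => simp
      | cast i => simpa using ha i
    | cast j => induction i using Fin.lastCases with
      | last => exact absurd hij (not_le.2 (Fin.castSucc_lt_last j))
      | cast i => simpa using hg (Fin.castSucc_le_castSucc_iff.1 hij)

lemma hasSum_of_tendsto_sum_of_monotone {α : Type*} {g : α → ℝ} (hg : 0 ≤ g)
    {S : ℕ → Finset α} (hS : Monotone S) (hcover : ∀ a, ∃ N, a ∈ S N) {L : ℝ}
    (hL : Tendsto (fun N => ∑ a ∈ S N, g a) atTop (𝓝 L)) : HasSum g L := by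
  have hST := tendsto_atTop_finset_of_monotone hS hcover
  have hmono : Monotone fun N => ∑ a ∈ S N, g a := fun N M h =>
    sum_le_sum_of_subset_of_nonneg (hS h) fun a _ _ => hg a
  have hsum : Summable g := summable_of_sum_le hg fun u => by
    obtain ⟨N, hN⟩ := (hST.eventually (eventually_ge_atTop u)).exists
    exact (sum_le_sum_of_subset_of_nonneg hN fun a _ _ => hg a).trans (hmono.ge_of_tendsto hL N)
  rw [← tendsto_nhds_unique (hsum.hasSum.comp hST) hL]
  exact hsum.hasSum

lemma Int.alternating_sum_upper_half_choose (n : ℕ) :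
    ∑ m ∈ Icc 1 (n + 1), (-1 : ℤ) ^ (m + 1) * (2 * n + 2).choose (n + 1 + m) =
      (2 * n + 1).choose (n + 1) := by
  have hfull := Int.alternating_sum_range_choose_of_ne (n := 2 * n + 2) (by omega)
  rw [show 2 * n + 2 + 1 = (n + 1 + 1) + (n + 1) by ring, sum_range_add,
    Int.alternating_sum_range_choose_eq_choose] at hfull
  rw [← Ico_succ_right_eq_Icc, sum_Ico_eq_sum_range, Order.succ_eq_add_one, Nat.add_sub_cancel]
  set S := ∑ k ∈ Finset.range (n + 1), (-1 : ℤ) ^ k * (2 * n + 2).choose (n + 2 + k)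
  have hupper : ∑ k ∈ Finset.range (n + 1),
      (-1 : ℤ) ^ (n + 1 + 1 + k) * (2 * n + 2).choose (n + 1 + 1 + k) = (-1) ^ n * S := by
    rw [mul_sum]
    exact sum_congr rfl fun k _ => by ring_nf
  have hgoal : ∑ k ∈ Finset.range (n + 1),
      (-1 : ℤ) ^ (1 + k + 1) * (2 * n + 2).choose (n + 1 + (1 + k)) = S :=
    sum_congr rfl fun k _ => by ring_nf
  rw [hupper] at hfull
  rw [hgoal]
  refine mul_left_cancel₀ (pow_ne_zero n (neg_ne_zero.2 one_ne_zero)) ?_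
  linear_combination hfull

lemma HasSum.even_one_div_nat_pow {s : ℕ} {z : ℝ} (hz : HasSum (fun m : ℕ => 1 / (m : ℝ) ^ s) z) :
    HasSum (fun m : ℕ => if Even m then 1 / (m : ℝ) ^ s else 0) (z / 2 ^ s) := by
  have hodd : HasSum (fun j : ℕ =>
      if Even (2 * j + 1) then 1 / ((2 * j + 1 : ℕ) : ℝ) ^ s else 0) 0 := by
    simp
  have hev : (fun j : ℕ => if Even (2 * j) then 1 / ((2 * j : ℕ) : ℝ) ^ s else 0) =
      fun j : ℕ => 1 / (j : ℝ) ^ s / 2 ^ s := by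
    funext j
    simp only [even_two_mul, if_true, Nat.cast_mul, Nat.cast_ofNat, mul_pow]
    ring
  rw [← add_zero (z / 2 ^ s)]
  exact HasSum.even_add_odd (f := fun m : ℕ => if Even m then 1 / (m : ℝ) ^ s else 0)
    (hev ▸ hz.div_const _) hodd

lemma HasSum.alternating_one_div_nat_pow {s : ℕ} {z : ℝ}
    (hz : HasSum (fun m : ℕ => 1 / (m : ℝ) ^ s) z) :
    HasSum (fun m : ℕ => 2 * (-1) ^ (m + 1) / (m : ℝ) ^ s) (2 * z - 4 * (z / 2 ^ s)) := by
  have hsplit : (fun m : ℕ => 2 * (-1) ^ (m + 1) / (m : ℝ) ^ s) = fun m : ℕ =>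
      2 * (1 / (m : ℝ) ^ s) - 4 * if Even m then 1 / (m : ℝ) ^ s else 0 := by
    funext m
    rcases Nat.even_or_odd m with hm | hm
    · simp [hm, hm.add_one.neg_one_pow]; ring
    · simp [Nat.not_even_iff_odd.2 hm, hm.add_one.neg_one_pow]; ring
  rw [hsplit]
  exact (hz.mul_left 2).sub (hz.even_one_div_nat_pow.mul_left 4)

lemma hasSum_alternating_zeta_bernoulli {k : ℕ} (hk : k ≠ 0) :
    HasSum (fun m : ℕ => 2 * (-1) ^ (m + 1) / (m : ℝ) ^ (2 * k))
      ((-1) ^ k * (π ^ (2 * k) / (2 * k)!) * (2 - 2 ^ (2 * k)) * bernoulli (2 * k)) := by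
  convert (hasSum_zeta_nat hk).alternating_one_div_nat_pow using 1
  have h2k : (2 : ℝ) ^ (2 * k) = 2 * 2 ^ (2 * k - 1) := by
    rw [← pow_succ']
    congr 1
    omega
  rw [h2k]
  field_simp
  ring

lemma hasSum_alternating_zeta_bernoulli_eval_half {k : ℕ} (hk : k ≠ 0) :
    HasSum (fun m : ℕ => 2 * (-1) ^ (m + 1) / (m : ℝ) ^ (2 * k))
      ((-1) ^ k * (2 * π) ^ (2 * k) * (((Polynomial.bernoulli (2 * k)).eval (1 / 2 : ℚ) : ℚ) : ℝ) /
        (2 * k)!) := by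
  have hcos := hasSum_one_div_nat_pow_mul_cos hk (x := 1 / 2) ⟨by norm_num, by norm_num⟩
  have hterm : (fun m : ℕ => 2 * (-1) ^ (m + 1) / (m : ℝ) ^ (2 * k)) =
      fun m : ℕ => -2 * (1 / (m : ℝ) ^ (2 * k) * Real.cos (2 * π * m * (1 / 2))) := by
    funext m
    rw [show 2 * π * m * (1 / 2) = m * π by ring, Real.cos_nat_mul_pi, pow_succ]
    ring
  have heval : (Polynomial.map (algebraMap ℚ ℝ) (Polynomial.bernoulli (2 * k))).eval (1 / 2 : ℝ) =
      (((Polynomial.bernoulli (2 * k)).eval (1 / 2 : ℚ) : ℚ) : ℝ) := by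
    rw [show (1 / 2 : ℝ) = algebraMap ℚ ℝ (1 / 2) by simp, Polynomial.eval_map_algebraMap,
      Polynomial.aeval_algebraMap_apply, Polynomial.coe_aeval_eq_eval, eq_ratCast]
  have hval : (-1) ^ k * (2 * π) ^ (2 * k) *
      (((Polynomial.bernoulli (2 * k)).eval (1 / 2 : ℚ) : ℚ) : ℝ) / (2 * k)! =
      -2 * ((-1) ^ (k + 1) * (2 * π) ^ (2 * k) / 2 / (2 * k)! *
        (Polynomial.map (algebraMap ℚ ℝ) (Polynomial.bernoulli (2 * k))).eval (1 / 2 : ℝ)) := by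
    rw [heval, pow_succ]
    ring
  rw [hterm, hval]
  exact hcos.mul_left (-2)

namespace ZetaStarTwo

/-- `2 (-1)^(m+1) N!² / ((N-m)! (N+m)!)` (and `0` for `m > N`): the coefficient of
`1 / (1 - x/m²)` in the partial fraction expansion of `∏_{k=1}^N (1 - x/k²)⁻¹`. -/
noncomputable def coeff (N m : ℕ) : ℝ :=
  2 * (-1) ^ (m + 1) * ∏ j ∈ range m, ((N : ℝ) - j) / (N + 1 + j)

lemma coeff_succ_right (N m : ℕ) :
    coeff N (m + 1) = -coeff N m * ((N - m) / (N + 1 + m)) := by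
  rw [coeff, coeff, prod_range_succ, pow_succ]
  ring

lemma coeff_eq_zero_of_lt {N m : ℕ} (h : N < m) : coeff N m = 0 := by
  rw [coeff, prod_eq_zero (mem_range.2 h) (by simp), mul_zero]

lemma coeff_succ_left_mul (N m : ℕ) :
    coeff (N + 1) m * ((N + 1) ^ 2 - m ^ 2) = coeff N m * (N + 1) ^ 2 := by
  induction m with
  | zero => simp [coeff]
  | succ m ih =>
    rw [coeff_succ_right, coeff_succ_right]
    have : (N : ℝ) + 1 + m ≠ 0 := by positivity
    have : ((N + 1 : ℕ) : ℝ) + 1 + m ≠ 0 := by positivity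
    push_cast at *
    field_simp
    linear_combination (-(N : ℝ) + m) * (N + 2 + m) * ih

lemma coeff_mul_choose {N m : ℕ} (h : m ≤ N) :
    coeff N m * (2 * N).choose N = 2 * (-1) ^ (m + 1) * (2 * N).choose (N + m) := by
  induction m with
  | zero => simp [coeff]
  | succ m ih =>
    have key := congrArg (Nat.cast : ℕ → ℝ) (Nat.choose_succ_right_eq (2 * N) (N + m))
    rw [show 2 * N - (N + m) = N - m by omega] at key
    push_cast [Nat.cast_sub (show m ≤ N by omega)] at key
    have : (N : ℝ) + 1 + m ≠ 0 := by positivity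
    rw [coeff_succ_right, ← add_assoc]
    field_simp
    linear_combination (-(N : ℝ) + m) * ih (by omega) + 2 * (-1) ^ (m + 1) * key

lemma sum_coeff {N : ℕ} (hN : N ≠ 0) : ∑ m ∈ Icc 1 N, coeff N m = 1 := by
  obtain ⟨n, rfl⟩ : ∃ n, N = n + 1 := ⟨N - 1, by omega⟩
  have hmid : (2 * (n + 1)).choose (n + 1) = 2 * (2 * n + 1).choose (n + 1) := by
    rw [show 2 * (n + 1) = 2 * n + 1 + 1 by ring, Nat.choose_succ_succ, ← Nat.choose_symm_half]
    ring
  have hC : ((2 * (n + 1)).choose (n + 1) : ℝ) ≠ 0 := by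
    exact_mod_cast (Nat.choose_pos (by omega)).ne'
  apply mul_right_cancel₀ hC
  rw [sum_mul, sum_congr rfl fun m hm => coeff_mul_choose (mem_Icc.1 hm).2]
  have := congrArg (Int.cast : ℤ → ℝ) (Int.alternating_sum_upper_half_choose n)
  push_cast at this
  rw [hmid]
  simp only [mul_assoc, ← mul_sum]
  push_cast
  linear_combination 2 * this

lemma sum_Icc_coeff_div_sq {j : ℕ} (hj : j ≠ 0) (N : ℕ) :
    ∑ M ∈ Icc 1 N, coeff M j / (M : ℝ) ^ 2 = coeff N j / (j : ℝ) ^ 2 := by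
  induction N with
  | zero => simp [coeff_eq_zero_of_lt (Nat.pos_of_ne_zero hj)]
  | succ N ih =>
    rw [sum_Icc_succ_top (by omega), ih]
    have hrec := coeff_succ_left_mul N j
    have : (j : ℝ) ≠ 0 := by exact_mod_cast hj
    push_cast
    field_simp
    linear_combination -hrec

lemma abs_coeff_le (N m : ℕ) : |coeff N m| ≤ 2 := by
  rcases lt_or_ge N m with h | h
  · simp [coeff_eq_zero_of_lt h]
  have hfac : ∀ j ∈ range m,
      0 ≤ ((N : ℝ) - j) / (N + 1 + j) ∧ ((N : ℝ) - j) / (N + 1 + j) ≤ 1 := by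
    intro j hj
    have hj : (j : ℝ) < N := by exact_mod_cast (mem_range.1 hj).trans_le h
    constructor
    · apply div_nonneg <;> linarith
    · rw [div_le_one (by positivity)]
      linarith
  rw [coeff, abs_mul, abs_of_nonneg (prod_nonneg fun j hj => (hfac j hj).1)]
  simpa using prod_le_one (fun j hj => (hfac j hj).1) (fun j hj => (hfac j hj).2)

lemma tendsto_coeff (m : ℕ) :
    Tendsto (fun N => coeff N m) atTop (𝓝 (2 * (-1) ^ (m + 1))) := by
  have hfac (j : ℕ) : Tendsto (fun N : ℕ => ((N : ℝ) - j) / (N + 1 + j)) atTop (𝓝 1) := by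
    convert tendsto_add_mul_div_add_mul_atTop_nhds (-j : ℝ) (1 + j) 1 one_ne_zero using 2 <;> ring
  unfold coeff
  simpa only [mul_one, prod_const_one] using
    (tendsto_finsetProd (range m) fun j _ => hfac j).const_mul (2 * (-1 : ℝ) ^ (m + 1))

open scoped Classical in
noncomputable def boundedMonotone (r N : ℕ) : Finset (Fin r → ℕ) :=
  {f ∈ Fintype.piFinset fun _ => Icc 1 N | Monotone f}

lemma mem_boundedMonotone {r N : ℕ} {f : Fin r → ℕ} :
    f ∈ boundedMonotone r N ↔ (∀ i, f i ∈ Icc 1 N) ∧ Monotone f := by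
  simp [boundedMonotone]

lemma boundedMonotone_mono (r : ℕ) : Monotone (boundedMonotone r) := fun N M h f hf => by
  rw [mem_boundedMonotone] at hf ⊢
  exact ⟨fun i => Icc_subset_Icc_right h (hf.1 i), hf.2⟩

lemma snoc_mem_boundedMonotone_iff {r N m : ℕ} {g : Fin r → ℕ} :
    Fin.snoc g m ∈ boundedMonotone (r + 1) N ↔ m ∈ Icc 1 N ∧ g ∈ boundedMonotone r m := by
  simp only [mem_boundedMonotone, Fin.forall_fin_succ', Fin.snoc_castSucc, Fin.snoc_last,
    Fin.monotone_snoc_iff, mem_Icc]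
  constructor
  · rintro ⟨⟨hg, hm⟩, hgm, hle⟩
    exact ⟨hm, fun i => ⟨(hg i).1, hle i⟩, hgm⟩
  · rintro ⟨hm, hg, hgm⟩
    exact ⟨⟨fun i => ⟨(hg i).1, (hg i).2.trans hm.2⟩, hm⟩, hgm, fun i => (hg i).2⟩

noncomputable def zetaStarPartial (r N : ℕ) : ℝ :=
  ∑ f ∈ boundedMonotone r N, ∏ i, ((f i : ℝ) ^ 2)⁻¹

lemma zetaStarPartial_zero (N : ℕ) : zetaStarPartial 0 N = 1 := by
  simp [zetaStarPartial, boundedMonotone, Subsingleton.monotone]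

lemma zetaStarPartial_succ (r N : ℕ) :
    zetaStarPartial (r + 1) N = ∑ m ∈ Icc 1 N, zetaStarPartial r m / m ^ 2 := by
  simp only [zetaStarPartial, sum_div, sum_sigma']
  refine sum_nbij' (fun f => ⟨f (Fin.last r), Fin.init f⟩) (fun p => Fin.snoc p.2 p.1)
    (fun f hf => ?_) (fun p hp => ?_) (fun f _ => Fin.snoc_init_self f) (fun p _ => ?_)
    (fun f _ => ?_)
  · rw [← Fin.snoc_init_self f, snoc_mem_boundedMonotone_iff] at hf
    simpa using hf
  · simpa [snoc_mem_boundedMonotone_iff] using hp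
  · simp
  · rw [Fin.prod_univ_castSucc, div_eq_mul_inv]
    rfl

lemma zetaStarPartial_eq_sum_coeff (r : ℕ) {N : ℕ} (hN : N ≠ 0) :
    zetaStarPartial r N = ∑ m ∈ Icc 1 N, coeff N m / (m : ℝ) ^ (2 * r) := by
  induction r generalizing N with
  | zero => simp [zetaStarPartial_zero, sum_coeff hN]
  | succ r ih =>
    have hextend {M : ℕ} (hM : M ∈ Icc 1 N) : ∑ m ∈ Icc 1 M, coeff M m / (m : ℝ) ^ (2 * r) =
        ∑ m ∈ Icc 1 N, coeff M m / (m : ℝ) ^ (2 * r) :=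
      sum_subset (Icc_subset_Icc_right (mem_Icc.1 hM).2) fun m hm hmM => by
        rw [coeff_eq_zero_of_lt (by simp_all), zero_div]
    calc zetaStarPartial (r + 1) N
        = ∑ M ∈ Icc 1 N, ∑ m ∈ Icc 1 N, coeff M m / (m : ℝ) ^ (2 * r) / (M : ℝ) ^ 2 := by
          rw [zetaStarPartial_succ]
          refine sum_congr rfl fun M hM => ?_
          rw [ih (by simp_all; omega), hextend hM, sum_div]
      _ = ∑ m ∈ Icc 1 N, (∑ M ∈ Icc 1 N, coeff M m / (M : ℝ) ^ 2) / (m : ℝ) ^ (2 * r) := by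
          rw [sum_comm]
          simp only [sum_div, div_right_comm]
      _ = ∑ m ∈ Icc 1 N, coeff N m / (m : ℝ) ^ (2 * (r + 1)) := by
          refine sum_congr rfl fun m hm => ?_
          rw [sum_Icc_coeff_div_sq (by simp_all; omega), div_div, ← pow_add]
          ring_nf

lemma tendsto_zetaStarPartial {r : ℕ} (hr : r ≠ 0) :
    Tendsto (zetaStarPartial r) atTop (𝓝 (∑' m : ℕ, 2 * (-1) ^ (m + 1) / (m : ℝ) ^ (2 * r))) := by
  have hbound : Summable fun m : ℕ => 2 / (m : ℝ) ^ (2 * r) := by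
    simpa [div_eq_mul_inv] using (Real.summable_one_div_nat_pow.2 (by omega)).mul_left 2
  refine (tendsto_tsum_of_dominated_convergence hbound (fun m => (tendsto_coeff m).div_const _)
    (Eventually.of_forall fun N m => ?_)).congr' ?_
  · have hpow : (0 : ℝ) ≤ (m : ℝ) ^ (2 * r) := by positivity
    rw [Real.norm_eq_abs, abs_div, abs_of_nonneg hpow]
    exact div_le_div_of_nonneg_right (abs_coeff_le N m) hpow
  · filter_upwards [eventually_ne_atTop 0] with N hN
    rw [zetaStarPartial_eq_sum_coeff r hN]
    refine tsum_eq_sum fun m hm => ?_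
    rcases Nat.eq_zero_or_pos m with rfl | hm0
    · simp [hr] -- `coeff N 0 / 0 ^ (2 * r) = 0` by the convention `x / 0 = 0`
    · rw [coeff_eq_zero_of_lt (by simp at hm; omega), zero_div]

lemma mzsv_const_two {r : ℕ} (hr : r ≠ 0) :
    mzsv (fun _ : Fin r => (2 : ℝ)) = ∑' m : ℕ, 2 * (-1) ^ (m + 1) / (m : ℝ) ^ (2 * r) := by
  classical
  let P : (Fin r → ℕ) → Prop := fun f => (∀ i, 1 ≤ f i) ∧ Monotone f
  have hP {N : ℕ} : ∀ f ∈ boundedMonotone r N, P f := fun f hf => by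
    rw [mem_boundedMonotone] at hf
    exact ⟨fun i => (mem_Icc.1 (hf.1 i)).1, hf.2⟩
  have hsum : HasSum (fun f : Subtype P => ∏ i, ((f.1 i : ℝ) ^ 2)⁻¹)
      (∑' m : ℕ, 2 * (-1) ^ (m + 1) / (m : ℝ) ^ (2 * r)) := by
    refine hasSum_of_tendsto_sum_of_monotone (fun f => prod_nonneg fun i _ => by positivity)
      (S := fun N => (boundedMonotone r N).subtype P)
      (fun N M h => subtype_mono (boundedMonotone_mono r h)) (fun f => ⟨∑ i, f.1 i, ?_⟩) ?_
    · rw [mem_subtype, mem_boundedMonotone]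
      exact ⟨fun i => mem_Icc.2 ⟨f.2.1 i, single_le_sum (fun j _ => Nat.zero_le _) (mem_univ i)⟩,
        f.2.2⟩
    · exact (tendsto_zetaStarPartial hr).congr fun N => (sum_subtype_of_mem _ hP).symm
  simp only [mzsv, Real.rpow_neg (Nat.cast_nonneg _), Real.rpow_two]
  exact hsum.tsum_eq

end ZetaStarTwo

/-- `ζ⋆({2}^n) = (-1)^n (π^{2n}/(2n)!) (2-2^{2n}) B_{2n}`, equivalently
`ζ⋆({2}^n) = (2πi)^{2n} B_{2n}(1/2)/(2n)!`. -/
theorem zeta_star_two_rep (n : ℕ) (hn : 1 ≤ n) :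
    mzsv (fun _ : Fin n => (2 : ℝ)) =
      (-1 : ℝ) ^ n * (π ^ (2 * n) / (Nat.factorial (2 * n))) * (2 - 2 ^ (2 * n)) *
        ((bernoulli (2 * n) : ℚ) : ℝ) ∧
    (mzsv (fun _ : Fin n => (2 : ℝ)) : ℂ) =
      (2 * π * Complex.I) ^ (2 * n) *
        (((Polynomial.bernoulli (2 * n)).eval ((1 : ℚ) / 2) : ℚ) : ℂ) /
          (Nat.factorial (2 * n)) := by
  have hn0 : n ≠ 0 := by omega
  rw [ZetaStarTwo.mzsv_const_two hn0]
  refine ⟨(hasSum_alternating_zeta_bernoulli hn0).tsum_eq, ?_⟩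
  rw [(hasSum_alternating_zeta_bernoulli_eval_half hn0).tsum_eq, mul_pow _ Complex.I,
    pow_mul Complex.I, Complex.I_sq]
  push_cast
  ring
end
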